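/- arXiv:2406.04718 — 5 statements merged into one kernel-verified Lean document; each statement's English description precedes it below -/
import Mathlib

section
/- For every real number t ≥ 1, the sum over n from ⌊t⌋+1 to infinity of 1/n² is strictly less than (π²-6)/(3t). -/
/-! Write `m = ⌊t⌋₊`, so the sum is `∑_{k > m} 1/k²` and `t < m + 1`. For `m = 1` the sum is
exactly `π²/6 - 1` and the claim reduces to `t < 2`. For `m ≥ 2` compare with the telescoping
series `∑_{k > m} 1/((k - 1/2)(k + 1/2)) = 1/(m + 1/2)`; then `π² > 9.8` suffices. -/

open Filter Topology

theorem hasSum_sub_succ_of_antitone {f : ℕ → ℝ} (hf : Antitone f)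
    (hlim : Tendsto f atTop (𝓝 0)) : HasSum (fun n => f n - f (n + 1)) (f 0) := by
  rw [hasSum_iff_tendsto_nat_of_nonneg fun n => sub_nonneg.2 (hf n.le_succ)]
  simp_rw [Finset.sum_range_sub']
  simpa using tendsto_const_nhds.sub hlim

theorem hasSum_one_div_add_mul_add_one {a : ℝ} (ha : 0 < a) :
    HasSum (fun n : ℕ => 1 / (((n : ℝ) + a) * ((n : ℝ) + a + 1))) (1 / a) := by
  have hanti : Antitone fun n : ℕ => 1 / ((n : ℝ) + a) := fun m n hmn => by
    dsimp only
    gcongr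
  have hlim : Tendsto (fun n : ℕ => 1 / ((n : ℝ) + a)) atTop (𝓝 0) := by
    simpa only [one_div, Pi.inv_def] using
      (tendsto_atTop_add_const_right atTop a tendsto_natCast_atTop_atTop).inv_tendsto_atTop
  convert hasSum_sub_succ_of_antitone hanti hlim using 1
  · ext n
    push_cast
    field_simp
    ring
  · simp

theorem tsum_one_div_add_sq_le {a : ℝ} (ha : 1 / 2 < a) :
    ∑' n : ℕ, 1 / ((n : ℝ) + a) ^ 2 ≤ 1 / (a - 1 / 2) := by
  have htel := hasSum_one_div_add_mul_add_one (a := a - 1 / 2) (by linarith)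
  have hle : ∀ n : ℕ,
      1 / ((n : ℝ) + a) ^ 2 ≤ 1 / (((n : ℝ) + (a - 1 / 2)) * ((n : ℝ) + (a - 1 / 2) + 1)) := by
    intro n
    have hn : (0 : ℝ) ≤ n := n.cast_nonneg
    apply one_div_le_one_div_of_le (by nlinarith)
    nlinarith
  exact hasSum_le hle (htel.summable.of_nonneg_of_le (fun n => by positivity) hle).hasSum htel

open Real in
theorem tsum_one_div_add_two_sq : ∑' n : ℕ, 1 / ((n : ℝ) + 2) ^ 2 = π ^ 2 / 6 - 1 := by
  have h := (hasSum_nat_add_iff' 2).mpr hasSum_zeta_two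
  norm_num [Finset.sum_range_succ] at h
  simpa only [one_div] using h.tsum_eq

open Real in
theorem sum_inv_sq_tail_lt (t : ℝ) (ht : 1 ≤ t) :
    (∑' n : ℕ, (1 : ℝ) / ((n : ℝ) + ⌊t⌋₊ + 1) ^ 2) < (π ^ 2 - 6) / (3 * t) := by
  have hfloor : 1 ≤ ⌊t⌋₊ := (Nat.one_le_floor_iff t).2 ht
  have hlt : t < ⌊t⌋₊ + 1 := Nat.lt_floor_add_one t
  have hpi : 9.8 < π ^ 2 := by nlinarith [pi_gt_d2]
  rcases hfloor.eq_or_lt with hone | htwo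
  · simp only [← hone, Nat.cast_one, add_assoc, one_add_one_eq_two]
    rw [tsum_one_div_add_two_sq, lt_div_iff₀ (by positivity)]
    rw [← hone, Nat.cast_one] at hlt
    nlinarith
  · have htwo' : (2 : ℝ) ≤ ⌊t⌋₊ := by exact_mod_cast htwo
    calc ∑' n : ℕ, (1 : ℝ) / ((n : ℝ) + ⌊t⌋₊ + 1) ^ 2
        ≤ 1 / ((⌊t⌋₊ : ℝ) + 1 - 1 / 2) := by
          simpa only [add_assoc] using tsum_one_div_add_sq_le (a := (⌊t⌋₊ : ℝ) + 1) (by linarith)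
      _ < (π ^ 2 - 6) / (3 * t) := by
          rw [div_lt_div_iff₀ (by linarith) (by linarith)]
          nlinarith
end

section
/- Let P, Q be integers with D = P² - 4Q, and let p be an odd prime not dividing Q·D. Then U_{p - (D/p)} ≡ 0 (mod p), where (D/p) is the Legendre symbol. -/
def lucasU (P Q : ℤ) : ℕ → ℤ
  | 0 => 0
  | 1 => 1
  | n + 2 => P * lucasU P Q (n + 1) - Q * lucasU P Q n

lemma lucasU_key {R : Type*} [CommRing R] (P Q : ℤ) (α β : R)
    (hP : ((P : ℤ) : R) = α + β) (hQ : ((Q : ℤ) : R) = α * β) :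
    ∀ n, (α - β) * ((lucasU P Q n : ℤ) : R) = α ^ n - β ^ n := by
  intro n
  induction n using Nat.twoStepInduction with
  | zero => simp [lucasU]
  | one => simp [lucasU]
  | more n ih1 ih2 =>
      rw [show lucasU P Q (n + 2) = P * lucasU P Q (n + 1) - Q * lucasU P Q n from rfl]
      push_cast
      rw [hP, hQ]
      ring_nf
      ring_nf at ih1 ih2
      linear_combination (α + β) * ih2 - (α * β) * ih1

theorem lucas_congruence (P Q : ℤ) (p : ℕ) [Fact p.Prime] (hodd : Odd p)
    (hdvd : ¬ (p : ℤ) ∣ Q * (P ^ 2 - 4 * Q)) :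
    (p : ℤ) ∣ lucasU P Q (((p : ℤ) - legendreSym p (P ^ 2 - 4 * Q)).toNat) := by
  have hp : p.Prime := Fact.out
  have hp2 : 2 ≤ p := hp.two_le
  set D : ℤ := P ^ 2 - 4 * Q with hDdef
  have hQ0 : ((Q : ℤ) : ZMod p) ≠ 0 := by
    intro h
    exact hdvd (dvd_mul_of_dvd_left ((ZMod.intCast_zmod_eq_zero_iff_dvd Q p).mp h) _)
  have hD0 : ((D : ℤ) : ZMod p) ≠ 0 := by
    intro h
    exact hdvd (dvd_mul_of_dvd_right ((ZMod.intCast_zmod_eq_zero_iff_dvd D p).mp h) _)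
  have h2 : (2 : ZMod p) ≠ 0 := by
    intro h
    have h' : (p : ℤ) ∣ 2 := (ZMod.intCast_zmod_eq_zero_iff_dvd 2 p).mp (by push_cast; exact h)
    have h'' : p ∣ 2 := by exact_mod_cast h'
    have : p = 2 := (Nat.prime_dvd_prime_iff_eq hp Nat.prime_two).mp h''
    rw [this] at hodd
    exact (by decide : ¬ Odd 2) hodd
  rcases legendreSym.eq_one_or_neg_one p hD0 with hleg | hleg
  · -- D is a QR: show p ∣ U_{p-1}
    rw [hleg]
    have hn : ((p : ℤ) - 1).toNat = p - 1 := by omega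
    rw [hn]
    obtain ⟨d, hd⟩ := (legendreSym.eq_one_iff p hD0).mp hleg
    have hd0 : d ≠ 0 := by
      intro h; rw [h, mul_zero] at hd; exact hD0 hd
    set i2 : ZMod p := (2 : ZMod p)⁻¹ with hi2
    have hi2m : i2 * 2 = 1 := inv_mul_cancel₀ h2
    set α : ZMod p := i2 * ((P : ZMod p) + d) with hα
    set β : ZMod p := i2 * ((P : ZMod p) - d) with hβ
    have hPc : ((P : ℤ) : ZMod p) = α + β := by
      rw [hα, hβ]; linear_combination (-(P : ZMod p)) * hi2m
    have hDc : ((P : ZMod p)) ^ 2 - 4 * ((Q : ℤ) : ZMod p) = d * d := by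
      rw [← hd]; push_cast [hDdef]; ring
    have hQc : ((Q : ℤ) : ZMod p) = α * β := by
      rw [hα, hβ]
      linear_combination (-(i2 * i2)) * hDc - ((Q : ℤ) : ZMod p) * (2 * i2 + 1) * hi2m
    have key := lucasU_key P Q α β hPc hQc (p - 1)
    have hαβ : α - β = d := by rw [hα, hβ]; linear_combination d * hi2m
    have hα0 : α ≠ 0 := fun h => hQ0 (by rw [hQc, h, zero_mul])
    have hβ0 : β ≠ 0 := fun h => hQ0 (by rw [hQc, h, mul_zero])
    rw [ZMod.pow_card_sub_one_eq_one hα0, ZMod.pow_card_sub_one_eq_one hβ0, sub_self, hαβ] at key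
    have hU : ((lucasU P Q (p - 1) : ℤ) : ZMod p) = 0 := by
      rcases mul_eq_zero.mp key with h | h
      · exact absurd h hd0
      · exact h
    exact (ZMod.intCast_zmod_eq_zero_iff_dvd _ p).mp hU
  · -- D is a non-residue: show p ∣ U_{p+1}
    rw [hleg]
    have hn : ((p : ℤ) - (-1)).toNat = p + 1 := by omega
    rw [hn]
    have hns : ¬ IsSquare ((D : ℤ) : ZMod p) := (legendreSym.eq_neg_one_iff p).mp hleg
    set Db : ZMod p := ((D : ℤ) : ZMod p) with hDb
    set f : Polynomial (ZMod p) := Polynomial.X ^ 2 - Polynomial.C Db with hf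
    have hirr : Irreducible f := by
      apply X_pow_sub_C_irreducible_of_prime Nat.prime_two
      intro b hb
      exact hns ⟨b, by rw [← hb]; ring⟩
    haveI : Fact (Irreducible f) := ⟨hirr⟩
    set F := AdjoinRoot f with hF
    set φ : ZMod p →+* F := AdjoinRoot.of f with hφ
    have hφinj : Function.Injective φ := φ.injective
    haveI : CharP F p := by
      have : algebraMap (ZMod p) F = φ := rfl
      exact charP_of_injective_algebraMap (this ▸ hφinj) p
    set r : F := AdjoinRoot.root f with hr
    have hr2 : r ^ 2 = φ Db := by
      have h : AdjoinRoot.mk f (Polynomial.X ^ 2 - Polynomial.C Db) = 0 := by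
        rw [← hf]; exact AdjoinRoot.mk_self
      rw [map_sub, map_pow, AdjoinRoot.mk_X, AdjoinRoot.mk_C, sub_eq_zero] at h
      exact h
    have hr0 : r ≠ 0 := by
      intro h
      rw [h] at hr2
      have : φ Db = φ 0 := by rw [map_zero, ← hr2]; ring
      exact hD0 (hφinj this)
    have hφpow : ∀ a : ZMod p, (φ a) ^ p = φ a := by
      intro a; rw [← map_pow, ZMod.pow_card]
    have hrp : r ^ p = -r := by
      have hpdiv : p = 2 * (p / 2) + 1 := by
        have := Nat.odd_iff.mp hodd; omega
      have hDpow : Db ^ (p / 2) = -1 := by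
        have h := (legendreSym.eq_pow p D)
        rw [hleg] at h; push_cast at h; rw [← h]
      calc r ^ p = (r ^ 2) ^ (p / 2) * r := by rw [← pow_mul, ← pow_succ, ← hpdiv]
        _ = φ (Db ^ (p / 2)) * r := by rw [hr2, map_pow]
        _ = -r := by rw [hDpow, map_neg, map_one]; ring
    set Pb : ZMod p := ((P : ℤ) : ZMod p) with hPb
    set Qb : ZMod p := ((Q : ℤ) : ZMod p) with hQb
    set i2 : ZMod p := (2 : ZMod p)⁻¹ with hi2
    have hi2m : i2 * 2 = 1 := inv_mul_cancel₀ h2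
    have hi2F : φ i2 * 2 = 1 := by
      rw [show (2 : F) = φ 2 from (map_ofNat φ 2).symm, ← map_mul, hi2m, map_one]
    set α : F := φ i2 * (φ Pb + r) with hα
    set β : F := φ i2 * (φ Pb - r) with hβ
    have hPcF : ((P : ℤ) : F) = α + β := by
      rw [show ((P : ℤ) : F) = φ Pb by rw [hPb, map_intCast], hα, hβ]
      linear_combination (-(φ Pb)) * hi2F
    have hDF : φ Db = φ Pb ^ 2 - 4 * φ Qb := by
      have : Db = Pb ^ 2 - 4 * Qb := by rw [hDb, hPb, hQb]; push_cast [hDdef]; ring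
      rw [this, map_sub, map_pow, map_mul, map_ofNat]
    have hQcF : ((Q : ℤ) : F) = α * β := by
      rw [show ((Q : ℤ) : F) = φ Qb by rw [hQb, map_intCast], hα, hβ]
      linear_combination (φ i2 * φ i2) * hr2 + (φ i2 * φ i2) * hDF -
        φ Qb * (2 * φ i2 + 1) * hi2F
    have hαβF : α - β = r := by
      rw [hα, hβ]; linear_combination r * hi2F
    have hαp : α ^ p = β := by
      rw [hα, mul_pow, hφpow, add_pow_char, hφpow, hrp, hβ]
      ring
    have hβp : β ^ p = α := by
      rw [hβ, mul_pow, hφpow, sub_pow_char, hφpow, hrp, hα]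
      ring
    have key := lucasU_key P Q α β hPcF hQcF (p + 1)
    rw [pow_succ, hαp, pow_succ, hβp, hαβF] at key
    have h0 : r * ((lucasU P Q (p + 1) : ℤ) : F) = 0 := by rw [key]; ring
    have hU : ((lucasU P Q (p + 1) : ℤ) : ZMod p) = 0 := by
      apply hφinj
      rw [map_zero, map_intCast]
      rcases mul_eq_zero.mp h0 with h | h
      · exact absurd h hr0
      · exact h
    exact (ZMod.intCast_zmod_eq_zero_iff_dvd _ p).mp hU
end

section
/- If an odd composite integer n is a Fermat pseudoprime to bases b and c (i.e., b^{n-1} ≡ 1 mod n and c^{n-1} ≡ 1 mod n, with gcd(bc, n) = 1), then n is a Lucas pseudoprime with parameters P ≡ b + c (mod n) and Q ≡ bc (mod n), provided the Jacobi symbol ((b-c)²/n) = 1; that is, U_{n-1}(P,Q) ≡ 0 (mod n). -/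
/-!
Over any ring in which `P = b + c` and `Q = b c`, the Lucas sequence satisfies
`U_k (b - c) = b^k - c^k`. In `ZMod n` the Fermat conditions make the right side vanish for
`k = n - 1`, and `J((b - c)^2 | n) = 1` forces `b - c` to be a unit, so `U_{n-1} = 0`.
-/

theorem lucasU_mul_sub {R : Type*} [CommRing R] {P Q : ℤ} {b c : R}
    (hP : (P : R) = b + c) (hQ : (Q : R) = b * c) :
    ∀ k, (lucasU P Q k : R) * (b - c) = b ^ k - c ^ k
  | 0 => by simp [lucasU]
  | 1 => by simp [lucasU]
  | k + 2 => by
    have ih₁ := lucasU_mul_sub hP hQ (k + 1)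
    have ih₀ := lucasU_mul_sub hP hQ k
    simp only [lucasU, Int.cast_sub, Int.cast_mul, hP, hQ]
    linear_combination (b + c) * ih₁ - b * c * ih₀

theorem ZMod.isUnit_intCast_of_jacobiSym_ne_zero {a : ℤ} {n : ℕ} [NeZero n]
    (h : jacobiSym a n ≠ 0) : IsUnit (a : ZMod n) := by
  rw [ZMod.coe_int_isUnit_iff_isCoprime, isCoprime_comm, Int.isCoprime_iff_gcd_eq_one]
  by_contra hgcd
  exact h (jacobiSym.eq_zero_iff_not_coprime.mpr hgcd)

theorem psp_two_bases_lpsp_general (n : ℕ) (hn : 1 < n)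
    (b c P Q : ℤ)
    (hb : b ^ (n - 1) ≡ 1 [ZMOD n]) (hc : c ^ (n - 1) ≡ 1 [ZMOD n])
    (hjac : jacobiSym ((b - c) ^ 2) n = 1)
    (hP : P ≡ b + c [ZMOD n]) (hQ : Q ≡ b * c [ZMOD n]) :
    (n : ℤ) ∣ lucasU P Q (n - 1) := by
  have : NeZero n := ⟨by omega⟩
  simp only [← ZMod.intCast_eq_intCast_iff, Int.cast_pow, Int.cast_add, Int.cast_mul,
    Int.cast_one] at hb hc hP hQ
  have hunit : IsUnit ((b : ZMod n) - c) := by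
    have := ZMod.isUnit_intCast_of_jacobiSym_ne_zero (hjac ▸ one_ne_zero)
    push_cast at this
    exact (isUnit_pow_iff two_ne_zero).mp this
  have key := lucasU_mul_sub hP hQ (n - 1)
  rw [hb, hc, sub_self, hunit.mul_left_eq_zero] at key
  exact (ZMod.intCast_zmod_eq_zero_iff_dvd _ _).mp key

theorem psp_two_bases_lpsp (n : ℕ) (hn : 1 < n) (hcomp : ¬ n.Prime) (hodd : Odd n)
    (b c P Q : ℤ) (hcop : Int.gcd (b * c) n = 1)
    (hb : b ^ (n - 1) ≡ 1 [ZMOD n]) (hc : c ^ (n - 1) ≡ 1 [ZMOD n])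
    (hjac : jacobiSym ((b - c) ^ 2) n = 1)
    (hP : P ≡ b + c [ZMOD n]) (hQ : Q ≡ b * c [ZMOD n]) :
    (n : ℤ) ∣ lucasU P Q (n - 1) :=
  psp_two_bases_lpsp_general n hn b c P Q hb hc hjac hP hQ
end

section
/- Let X and Y_1 ⊇ Y_2 ⊇ ... ⊇ Y_t be events in a probability space such that P(Y_i ∩ X)/P(Y_{i-1} ∩ X) ≤ c for all r < i ≤ t (for some constant 0 < c < 1 and integer 0 ≤ r < t), and P(X^c ∩ Y_t) = P(X^c ∩ Y_r) = P(X^c) > 0. Then P(X | Y_t) ≤ c^{t-r} · P(X | Y_r)/(1 - P(X | Y_r)). -/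
open MeasureTheory

theorem cond_prob_iteration_bound {Ω : Type*} [MeasurableSpace Ω]
    (μ : Measure Ω) [IsProbabilityMeasure μ]
    (X : Set Ω) (Y : ℕ → Set Ω) (c : ℝ) (hc0 : 0 < c) (hc1 : c < 1)
    (r t : ℕ) (hrt : r < t)
    (hmono : ∀ i j, i ≤ j → Y j ⊆ Y i)
    (hratio : ∀ i, r < i → i ≤ t →
      (μ (Y i ∩ X)).toReal ≤ c * (μ (Y (i - 1) ∩ X)).toReal)
    (hXct : μ (Xᶜ ∩ Y t) = μ Xᶜ) (hXcr : μ (Xᶜ ∩ Y r) = μ Xᶜ)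
    (hXc_pos : 0 < (μ Xᶜ).toReal)
    (hYt : 0 < (μ (Y t)).toReal)
    (hqr : (μ (X ∩ Y r)).toReal / (μ (Y r)).toReal < 1) :
    (μ (X ∩ Y t)).toReal / (μ (Y t)).toReal ≤
      c ^ (t - r) * ((μ (X ∩ Y r)).toReal / (μ (Y r)).toReal) /
        (1 - (μ (X ∩ Y r)).toReal / (μ (Y r)).toReal) := by
  set a := (μ (X ∩ Y t)).toReal with ha
  set b := (μ (X ∩ Y r)).toReal with hb
  set m := (μ (Y t)).toReal with hm
  set n := (μ (Y r)).toReal with hn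
  set p := (μ Xᶜ).toReal with hp
  have ha0 : 0 ≤ a := ENNReal.toReal_nonneg
  have hb0 : 0 ≤ b := ENNReal.toReal_nonneg
  -- p ≤ m
  have hpm : p ≤ m := by
    rw [hp, hm, ← hXct]
    exact ENNReal.toReal_mono (measure_ne_top μ _) (measure_mono Set.inter_subset_right)
  have hpn : p ≤ n := by
    rw [hp, hn, ← hXcr]
    exact ENNReal.toReal_mono (measure_ne_top μ _) (measure_mono Set.inter_subset_right)
  have hn0 : 0 < n := lt_of_lt_of_le hXc_pos hpn
  -- n ≤ b + p
  have hnbp : n ≤ b + p := by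
    rw [hn, hb, hp, ← hXcr]
    have hcov : Y r ⊆ (X ∩ Y r) ∪ (Xᶜ ∩ Y r) := by
      intro x hx
      by_cases hxX : x ∈ X
      · exact Or.inl ⟨hxX, hx⟩
      · exact Or.inr ⟨hxX, hx⟩
    calc (μ (Y r)).toReal ≤ (μ ((X ∩ Y r) ∪ (Xᶜ ∩ Y r))).toReal :=
          ENNReal.toReal_mono (measure_ne_top μ _) (measure_mono hcov)
      _ ≤ (μ (X ∩ Y r)).toReal + (μ (Xᶜ ∩ Y r)).toReal := by
          rw [← ENNReal.toReal_add (measure_ne_top μ _) (measure_ne_top μ _)]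
          exact ENNReal.toReal_mono (by simp [measure_ne_top]) (measure_union_le _ _)
  -- key induction: a ≤ c^(t-r) * b
  have key : ∀ k, r + k ≤ t → (μ (Y (r + k) ∩ X)).toReal ≤ c ^ k * (μ (Y r ∩ X)).toReal := by
    intro k
    induction k with
    | zero => intro _; simp
    | succ k ih =>
      intro hk
      have h1 : (μ (Y (r + (k + 1)) ∩ X)).toReal ≤ c * (μ (Y (r + k) ∩ X)).toReal := by
        have := hratio (r + (k + 1)) (by omega) hk
        simpa [Nat.add_sub_cancel, show r + (k + 1) - 1 = r + k by omega] using this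
      calc (μ (Y (r + (k + 1)) ∩ X)).toReal ≤ c * (μ (Y (r + k) ∩ X)).toReal := h1
        _ ≤ c * (c ^ k * (μ (Y r ∩ X)).toReal) := by
            exact mul_le_mul_of_nonneg_left (ih (by omega)) hc0.le
        _ = c ^ (k + 1) * (μ (Y r ∩ X)).toReal := by ring
  have hab : a ≤ c ^ (t - r) * b := by
    have := key (t - r) (by omega)
    rw [ha, hb, Set.inter_comm X (Y t), Set.inter_comm X (Y r)]
    simpa [show r + (t - r) = t by omega] using this
  have hbn : b < n := by
    have := (div_lt_one hn0).mp hqr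
    exact this
  have hnb0 : 0 < n - b := by linarith
  have hnbp' : n - b ≤ p := by linarith
  have hck : 0 ≤ c ^ (t - r) := pow_nonneg hc0.le _
  -- RHS rewrite
  have hrhs : c ^ (t - r) * (b / n) / (1 - b / n) = c ^ (t - r) * b / (n - b) := by
    field_simp
  rw [hrhs]
  calc a / m ≤ a / p := div_le_div_of_nonneg_left ha0 hXc_pos hpm
    _ ≤ (c ^ (t - r) * b) / p := by gcongr
    _ ≤ (c ^ (t - r) * b) / (n - b) :=
        div_le_div_of_nonneg_left (mul_nonneg hck hb0) hnb0 hnbp'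
end

section
/- Let S be a finite nonempty set, f : S → [0, c] a function with 0 < c < 1, and define q_t = (∑_{n ∈ S₀} f(n)^t)/(∑_{n ∈ S₀} f(n)^t + |S₁|) where S = S₀ ⊔ S₁ is a partition with S₁ nonempty. Then for all integers r < t, q_t ≤ c^{t-r} · q_r/(1 - q_r). -/
/-! Write `A u = ∑_{S₀} f^u` and `B = |S₁| > 0`. Then `q u / (1 - q u) = A u / B` are the odds of
being composite, `q t ≤ A t / B`, and termwise `f^t ≤ c^(t-r) f^r` gives `A t ≤ c^(t-r) A r`. -/

open Finset

theorem sum_pow_le_pow_sub_mul_sum_pow {α : Type*} {s : Finset α} {f : α → ℝ} {c : ℝ}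
    (hf0 : ∀ n ∈ s, 0 ≤ f n) (hfc : ∀ n ∈ s, f n ≤ c) {r t : ℕ} (hrt : r ≤ t) :
    ∑ n ∈ s, f n ^ t ≤ c ^ (t - r) * ∑ n ∈ s, f n ^ r := by
  rw [mul_sum]
  refine sum_le_sum fun n hn => ?_
  calc f n ^ t = f n ^ (t - r) * f n ^ r := by rw [← pow_add, Nat.sub_add_cancel hrt]
    _ ≤ c ^ (t - r) * f n ^ r := by gcongr; exacts [pow_nonneg (hf0 n hn) r, hf0 n hn, hfc n hn]

theorem div_add_div_one_sub_div_add {a b : ℝ} (ha : 0 ≤ a) (hb : 0 < b) :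
    a / (a + b) / (1 - a / (a + b)) = a / b := by
  have hab : a + b ≠ 0 := by positivity
  rw [one_sub_div hab, add_sub_cancel_left, div_div_div_cancel_right₀ hab]

theorem finset_passing_prob_bound_general {α : Type*} [DecidableEq α]
    (S S0 S1 : Finset α) (hU : S0 ∪ S1 = S)
    (hS1 : S1.Nonempty)
    (f : α → ℝ) (c : ℝ)
    (hf0 : ∀ n ∈ S, 0 ≤ f n) (hfc : ∀ n ∈ S, f n ≤ c)
    (q : ℕ → ℝ)
    (hq : ∀ u, q u = (∑ n ∈ S0, f n ^ u) / ((∑ n ∈ S0, f n ^ u) + (S1.card : ℝ)))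
    (r t : ℕ) (hrt : r < t) :
    q t ≤ c ^ (t - r) * q r / (1 - q r) := by
  have hS0 : S0 ⊆ S := hU ▸ subset_union_left
  have hB : (0 : ℝ) < S1.card := by exact_mod_cast hS1.card_pos
  have hA (u : ℕ) : 0 ≤ ∑ n ∈ S0, f n ^ u :=
    sum_nonneg fun n hn => pow_nonneg (hf0 n (hS0 hn)) u
  rw [mul_div_assoc, hq r, div_add_div_one_sub_div_add (hA r) hB, hq t, ← mul_div_assoc]
  calc (∑ n ∈ S0, f n ^ t) / ((∑ n ∈ S0, f n ^ t) + S1.card)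
      ≤ (∑ n ∈ S0, f n ^ t) / S1.card :=
        div_le_div_of_nonneg_left (hA t) hB (le_add_of_nonneg_left (hA t))
    _ ≤ c ^ (t - r) * (∑ n ∈ S0, f n ^ r) / S1.card := by
        gcongr
        exact sum_pow_le_pow_sub_mul_sum_pow (fun n hn => hf0 n (hS0 hn))
          (fun n hn => hfc n (hS0 hn)) hrt.le

theorem finset_passing_prob_bound {α : Type*} [DecidableEq α]
    (S S0 S1 : Finset α) (hU : S0 ∪ S1 = S) (hdisj : Disjoint S0 S1)
    (hS : S.Nonempty) (hS1 : S1.Nonempty)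
    (f : α → ℝ) (c : ℝ) (hc0 : 0 < c) (hc1 : c < 1)
    (hf0 : ∀ n ∈ S, 0 ≤ f n) (hfc : ∀ n ∈ S, f n ≤ c)
    (q : ℕ → ℝ)
    (hq : ∀ u, q u = (∑ n ∈ S0, f n ^ u) / ((∑ n ∈ S0, f n ^ u) + (S1.card : ℝ)))
    (r t : ℕ) (hrt : r < t) :
    q t ≤ c ^ (t - r) * q r / (1 - q r) :=
  finset_passing_prob_bound_general S S0 S1 hU hS1 f c hf0 hfc q hq r t hrt
end
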